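/- arXiv:2410.00648 — 3 statements merged into one kernel-verified Lean document; each statement's English description precedes it below -/
import Mathlib

section
/- Let s ≥ 2 and t ≥ 1 be integers, let G be a finite simple graph with vertices x, y, z, and let W ⊆ V(G) \ {z} be a vertex subset with x, y ∈ W. Suppose there exist s paths P_1, …, P_s from x to y in the induced subgraph G[W] whose lengths are s consecutive integers, and there exist t admissible paths Q_1, …, Q_t from y to z in the induced subgraph G[(V(G) \ W) ∪ {y}]. Then G contains at least s + t − 1 paths from x to z whose lengths are consecutive integers. -/
/-!
Concatenating the `i`-th path `x → y` with the `j`-th path `y → z` gives a path, since the two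
meet only in `y`, of length `ℓ + m + (i + d j)`. As `d ≤ 2 ≤ s`, the numbers `i + d j` with
`i < s`, `j < t` fill the whole interval `[0, s + d (t - 1))`, which contains `[0, s + t - 1)`.
-/

namespace SimpleGraph.Walk

variable {V : Type*} {G : SimpleGraph V} {u v w : V}

theorem IsPath.append {p : G.Walk u v} {q : G.Walk v w} (hp : p.IsPath) (hq : q.IsPath)
    (hpq : ∀ a ∈ p.support, a ∈ q.support → a = v) : (p.append q).IsPath := by
  have hq' := hq.support_nodup
  rw [← cons_tail_support] at hq'
  rw [isPath_def, support_append, List.nodup_append]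
  refine ⟨hp.support_nodup, hq'.of_cons, fun a ha b hb hab => ?_⟩
  subst hab
  obtain rfl := hpq a ha (List.mem_of_mem_tail hb)
  exact (List.nodup_cons.mp hq').1 hb

end SimpleGraph.Walk

theorem Nat.exists_lt_lt_add_mul_eq {s t d k : ℕ} (hds : d ≤ s) (ht : 1 ≤ t)
    (hk : k < s + d * (t - 1)) : ∃ i < s, ∃ j < t, i + d * j = k := by
  rcases Nat.lt_or_ge (k / d) t with h | h
  · refine ⟨k % d, ?_, k / d, h, Nat.mod_add_div k d⟩
    rcases d.eq_zero_or_pos with rfl | hd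
    · simpa using hk
    · exact (Nat.mod_lt k hd).trans_le hds
  · have hdt : d * (t - 1) ≤ k :=
      (Nat.mul_le_mul_left d (by omega)).trans (Nat.mul_div_le k d)
    exact ⟨k - d * (t - 1), by omega, t - 1, by omega, by omega⟩

theorem merge_consecutive_and_admissible_paths_general
    {V : Type*} (G : SimpleGraph V) (x y z : V) (W : Set V)
    (s t : ℕ) (hs : 2 ≤ s) (ht : 1 ≤ t)
    (hP : ∃ ℓ : ℕ, ∀ i : ℕ, i < s →
      ∃ P : G.Walk x y, P.IsPath ∧ (∀ u ∈ P.support, u ∈ W) ∧ P.length = ℓ + i)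
    (hQ : ∃ m d : ℕ, 2 ≤ m ∧ (d = 1 ∨ d = 2) ∧ ∀ j : ℕ, j < t →
      ∃ Q : G.Walk y z, Q.IsPath ∧ (∀ u ∈ Q.support, u ∉ W ∨ u = y) ∧
        Q.length = m + d * j) :
    ∃ L : ℕ, ∀ i : ℕ, i < s + t - 1 →
      ∃ R : G.Walk x z, R.IsPath ∧ R.length = L + i := by
  obtain ⟨ℓ, hP⟩ := hP
  obtain ⟨m, d, -, hd, hQ⟩ := hQ
  refine ⟨ℓ + m, fun k hk => ?_⟩
  obtain ⟨i, hi, j, hj, rfl⟩ : ∃ i < s, ∃ j < t, i + d * j = k :=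
    Nat.exists_lt_lt_add_mul_eq (by omega) ht (by rcases hd with rfl | rfl <;> omega)
  obtain ⟨P, hPpath, hPW, hPlen⟩ := hP i hi
  obtain ⟨Q, hQpath, hQW, hQlen⟩ := hQ j hj
  have hmeet : ∀ u ∈ P.support, u ∈ Q.support → u = y :=
    fun u hu hu' => (hQW u hu').resolve_left (not_not_intro (hPW u hu))
  refine ⟨P.append Q, hPpath.append hQpath hmeet, ?_⟩
  rw [SimpleGraph.Walk.length_append, hPlen, hQlen]
  ring

/-- Merging lemma: given `s` consecutive paths from `x` to `y` inside `W` and `t`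
admissible paths from `y` to `z` avoiding `W \ {y}`, the graph contains `s + t - 1`
paths from `x` to `z` of consecutive lengths. -/
theorem merge_consecutive_and_admissible_paths
    {V : Type*} [Fintype V] (G : SimpleGraph V) (x y z : V) (W : Set V)
    (s t : ℕ) (hs : 2 ≤ s) (ht : 1 ≤ t)
    (hzW : z ∉ W) (hxW : x ∈ W) (hyW : y ∈ W)
    (hP : ∃ ℓ : ℕ, ∀ i : ℕ, i < s →
      ∃ P : G.Walk x y, P.IsPath ∧ (∀ u ∈ P.support, u ∈ W) ∧ P.length = ℓ + i)
    (hQ : ∃ m d : ℕ, 2 ≤ m ∧ (d = 1 ∨ d = 2) ∧ ∀ j : ℕ, j < t →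
      ∃ Q : G.Walk y z, Q.IsPath ∧ (∀ u ∈ Q.support, u ∉ W ∨ u = y) ∧
        Q.length = m + d * j) :
    ∃ L : ℕ, ∀ i : ℕ, i < s + t - 1 →
      ∃ R : G.Walk x z, R.IsPath ∧ R.length = L + i :=
  merge_consecutive_and_admissible_paths_general G x y z W s t hs ht hP hQ
end

section
/- Let G be a finite simple 2-connected graph with minimum degree at least 3, and let C = v_0 v_1 ⋯ v_{2s} v_0 (with s ≥ 1, indices modulo 2s+1) be an induced odd cycle of G such that G_1 := G − V(C) is connected but not 2-connected. Let D_1 be an end-block of G_1 with cut-vertex x, let A = V(D_1) \ {x}, and let B = V(G_1) \ A. Then there exists i ∈ ℤ_{2s+1} such that v_i has a neighbor in A and v_{i+s} has a neighbor in B. -/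
/-!
The end-block `D₁` meets the rest of `G₁` only in `x`: an edge from `a ∈ A` to `G₁ - D₁`, together
with a path back to `x` avoiding `a` (which is not a cut-vertex of `G₁`), would be an ear enlarging
the block. Hence `A`, and likewise every component of `G₁ - x` inside `B`, is separated from the
rest of `G - x` by `C` alone; as `G - x` is connected, some `v_i` has a neighbour in `A` and some
`v_j` one in `B`. Every `v_i` has a neighbour in `A ∪ B` (degree at least 3, `C` induced). If the
conclusion failed, having a neighbour in `A` would pass from `v_i` to `v_{i+s}`, and `s` generates
`ℤ_{2s+1}`, so every `v_i` would have one, and then no `v_j` could have a neighbour in `B`.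
-/

/-- A graph is `k`-connected if it has more than `k` vertices and removing any set of
fewer than `k` vertices leaves it connected. -/
def KConnected {V : Type*} [Fintype V] (G : SimpleGraph V) (k : ℕ) : Prop :=
  k < Fintype.card V ∧
    ∀ S : Finset V, S.card < k → (G.induce ((↑S : Set V)ᶜ)).Connected

/-- `w` is a cut-vertex of the subgraph of `G` induced on the (connected) set `S`:
removing `w` leaves a nonempty disconnected graph. -/
def IsCutVertexOn {V : Type*} (G : SimpleGraph V) (S : Set V) (w : V) : Prop :=
  w ∈ S ∧ (S \ {w}).Nonempty ∧ ¬ (G.induce (S \ {w})).Connected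

/-- The subgraph of `G` induced on `T` is connected and has no cut-vertex of itself. -/
def NoCutVertexOn {V : Type*} (G : SimpleGraph V) (T : Set V) : Prop :=
  (G.induce T).Connected ∧ ∀ w ∈ T, ¬ IsCutVertexOn G T w

/-- `T` is (the vertex set of) a block of the subgraph of `G` induced on `S`:
a maximal connected subgraph without a cut-vertex of itself. -/
def IsBlockOn {V : Type*} (G : SimpleGraph V) (S T : Set V) : Prop :=
  T ⊆ S ∧ T.Nonempty ∧ NoCutVertexOn G T ∧
    ∀ T' : Set V, T ⊆ T' → T' ⊆ S → NoCutVertexOn G T' → T' = T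

/-- `T` is an end-block with cut-vertex `x` of the subgraph of `G` induced on `S`:
a block containing exactly one cut-vertex `x` of the induced subgraph. -/
def IsEndBlockOn {V : Type*} (G : SimpleGraph V) (S T : Set V) (x : V) : Prop :=
  IsBlockOn G S T ∧ x ∈ T ∧ IsCutVertexOn G S x ∧
    ∀ w ∈ T, IsCutVertexOn G S w → w = x

/-- The subgraph of `G` induced on `S` is 2-connected: more than two vertices and
removing any single vertex leaves it connected. -/
def TwoConnectedOn {V : Type*} (G : SimpleGraph V) (S : Set V) : Prop :=
  2 < S.ncard ∧ ∀ w ∈ S, (G.induce (S \ {w})).Connected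

namespace SimpleGraph

variable {V : Type*} {G : SimpleGraph V}

lemma exists_isPath_of_reachable_induce {U : Set V} {u v : V} {hu : u ∈ U} {hv : v ∈ U}
    (h : (G.induce U).Reachable ⟨u, hu⟩ ⟨v, hv⟩) :
    ∃ p : G.Walk u v, p.IsPath ∧ ∀ z ∈ p.support, z ∈ U := by
  classical
  obtain ⟨q⟩ := h
  let p := q.map (Embedding.induce U).toHom
  refine ⟨p.toPath.1, p.toPath.2, fun z hz => ?_⟩
  have hz' : z ∈ p.support := p.support_toPath_subset_support hz
  rw [Walk.support_map, List.mem_map] at hz'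
  obtain ⟨z', -, rfl⟩ := hz'
  exact z'.2

lemma exists_adj_of_preconnected_induce {U D : Set V} (hU : (G.induce U).Preconnected)
    {d u : V} (hdU : d ∈ U) (hd : d ∈ D) (huU : u ∈ U) (hu : u ∉ D) :
    ∃ d' ∈ D, ∃ u' ∈ U, u' ∉ D ∧ G.Adj d' u' := by
  obtain ⟨p⟩ := hU ⟨d, hdU⟩ ⟨u, huU⟩
  obtain ⟨e, -, he₁, he₂⟩ := p.exists_boundary_dart {y | y.1 ∈ D} hd hu
  exact ⟨_, he₁, _, e.snd.2, he₂, e.adj⟩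

lemma exists_closed_disjoint_of_not_connected_induce {U A : Set V}
    (hU : ¬ (G.induce U).Connected) (hA : (G.induce A).Connected) (hAU : A ⊆ U) :
    ∃ D ⊆ U, D.Nonempty ∧ Disjoint D A ∧ ∀ d ∈ D, ∀ y ∈ U, G.Adj d y → y ∈ D := by
  obtain ⟨⟨a, ha⟩⟩ := hA.nonempty
  set a' : U := ⟨a, hAU ha⟩
  obtain ⟨u, hu⟩ : ∃ u, ¬ (G.induce U).Reachable a' u := by
    by_contra! h
    exact hU ((connected_iff_exists_forall_reachable _).mpr ⟨a', h⟩)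
  refine ⟨{v | ∃ hv : v ∈ U, ¬ (G.induce U).Reachable a' ⟨v, hv⟩}, fun v hv => hv.1,
    ⟨u, u.2, hu⟩, Set.disjoint_left.mpr fun v ⟨_, hv⟩ hvA => hv ?_, ?_⟩
  · exact (hA.preconnected ⟨a, ha⟩ ⟨v, hvA⟩).map (G.induceHomOfLE hAU).toHom
  · rintro d ⟨hdU, hd⟩ y hyU hdy
    exact ⟨hyU, fun hy => hd (hy.trans (Adj.reachable (by exact hdy.symm)))⟩

lemma exists_adj_compl_of_closed {S D : Set V} {x r : V} (hGx : (G.induce {x}ᶜ).Preconnected)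
    (hDS : D ⊆ S \ {x}) (hD : D.Nonempty) (hcl : ∀ d ∈ D, ∀ y ∈ S \ {x}, G.Adj d y → y ∈ D)
    (hr : r ∉ S) (hrx : r ≠ x) : ∃ d ∈ D, ∃ y ∉ S, G.Adj d y := by
  obtain ⟨d, hd⟩ := hD
  obtain ⟨d', hd', y, hyx, hyD, hdy⟩ :=
    exists_adj_of_preconnected_induce hGx (hDS hd).2 hd hrx fun h => hr (hDS h).1
  exact ⟨d', hd', y, fun hyS => hyD (hcl d' hd' y ⟨hyS, hyx⟩ hdy), hdy⟩

lemma Walk.IsPath.exists_walk_avoiding {u v z w : V} {p : G.Walk u v} (hp : p.IsPath)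
    (hz : z ∈ p.support) (hwz : w ≠ z) :
    ∃ e, (e = u ∨ e = v) ∧ ∃ q : G.Walk z e, q.support ⊆ p.support ∧ w ∉ q.support := by
  classical
  by_cases hw : w ∈ (p.takeUntil z hz).support
  · refine ⟨v, Or.inr rfl, p.dropUntil z hz, p.support_dropUntil_subset_support hz, fun hw' => ?_⟩
    have hnd : ((p.takeUntil z hz).append (p.dropUntil z hz)).support.Nodup := by
      rw [p.take_spec hz]
      exact hp.support_nodup
    rw [Walk.support_append] at hnd
    rw [← Walk.cons_tail_support, List.mem_cons] at hw'
    exact List.disjoint_of_nodup_append hnd hw (hw'.resolve_left hwz)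
  · refine ⟨u, Or.inl rfl, (p.takeUntil z hz).reverse, ?_, by simpa using hw⟩
    simpa using p.support_takeUntil_subset_support hz

lemma exists_adj_notMem_range [Fintype V] [DecidableRel G.Adj] {n : ℕ} {f : ZMod n → V}
    (hind : ∀ i j, G.Adj (f i) (f j) → j = i + 1 ∨ i = j + 1) (i : ZMod n)
    (hdeg : 3 ≤ G.degree (f i)) : ∃ u ∉ Set.range f, G.Adj (f i) u := by
  classical
  by_contra! h
  have hsub : G.neighborFinset (f i) ⊆ {f (i + 1), f (i - 1)} := by
    intro u hu
    rw [mem_neighborFinset] at hu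
    obtain ⟨j, rfl⟩ := not_not.mp fun hj => h u hj hu
    rcases hind i j hu with rfl | rfl <;> simp
  have hcard := (Finset.card_le_card hsub).trans Finset.card_le_two
  rw [card_neighborFinset_eq_degree] at hcard
  omega

end SimpleGraph

open SimpleGraph

section Blocks

variable {V : Type*} {G : SimpleGraph V}

lemma NoCutVertexOn.connected_induce_diff {T : Set V} (hT : NoCutVertexOn G T) {w : V}
    (hne : (T \ {w}).Nonempty) : (G.induce (T \ {w})).Connected := by
  by_cases hw : w ∈ T
  · by_contra h
    exact hT.2 w hw ⟨hw, hne, h⟩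
  · rw [Set.sdiff_singleton_eq_self hw]
    exact hT.1

lemma noCutVertexOn_pair {x z : V} (h : G.Adj x z) : NoCutVertexOn G {x, z} := by
  refine ⟨induce_pair_connected_of_adj h, fun w hw hcut => hcut.2.2 ?_⟩
  have hsub : ({x, z} \ {w} : Set V).Subsingleton := by
    rcases hw with rfl | rfl <;> intro a ha b hb <;> grind
  have := hsub.coe_sort
  have := hcut.2.1.to_subtype
  exact ⟨Preconnected.of_subsingleton⟩

lemma NoCutVertexOn.union_support {T : Set V} (hT : NoCutVertexOn G T) {u v : V}
    {p : G.Walk u v} (hp : p.IsPath) (hu : u ∈ T) (hv : v ∈ T) (huv : u ≠ v) :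
    NoCutVertexOn G (T ∪ {z | z ∈ p.support}) := by
  refine ⟨induce_union_connected hT.1.preconnected p.connected_induce_support.preconnected
    ⟨u, hu, p.start_mem_support⟩, fun w _ hcut => hcut.2.2 ?_⟩
  obtain ⟨c, hcT, hcw⟩ : ∃ c ∈ T, c ≠ w := by
    by_cases h : u = w
    exacts [⟨v, hv, h ▸ huv.symm⟩, ⟨u, hu, h⟩]
  have hTw : (G.induce (T \ {w})).Connected := hT.connected_induce_diff ⟨c, hcT, hcw⟩
  refine induce_connected_of_patches c ⟨Or.inl hcT, hcw⟩ fun {y} hy => ?_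
  rcases hy with ⟨hyT | hyp, hyw⟩
  · exact ⟨T \ {w}, Set.sdiff_subset_sdiff_left Set.subset_union_left, ⟨hcT, hcw⟩, ⟨hyT, hyw⟩,
      hTw.preconnected _ _⟩
  obtain ⟨e, he, q, hqp, hwq⟩ := hp.exists_walk_avoiding hyp (Ne.symm hyw)
  have heT : e ∈ T \ {w} :=
    ⟨he.elim (· ▸ hu) (· ▸ hv), fun h => hwq ((Set.mem_singleton_iff.mp h) ▸ q.end_mem_support)⟩
  refine ⟨T \ {w} ∪ {z | z ∈ q.support}, ?_, Or.inl ⟨hcT, hcw⟩, Or.inr q.start_mem_support,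
    (induce_union_connected hTw.preconnected q.connected_induce_support.preconnected
      ⟨e, heT, q.end_mem_support⟩).preconnected _ _⟩
  rintro z (⟨hzT, hzw⟩ | hzq)
  · exact ⟨Or.inl hzT, hzw⟩
  · exact ⟨Or.inr (hqp hzq), fun h => hwq ((Set.mem_singleton_iff.mp h) ▸ hzq)⟩

lemma IsBlockOn.mem_of_mem_support {S T : Set V} (hT : IsBlockOn G S T) {u v : V}
    {p : G.Walk u v} (hp : p.IsPath) (hu : u ∈ T) (hv : v ∈ T) (huv : u ≠ v)
    (hpS : ∀ z ∈ p.support, z ∈ S) {z : V} (hz : z ∈ p.support) : z ∈ T := by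
  have hT' := hT.2.2.2 _ Set.subset_union_left (Set.union_subset hT.1 hpS)
    (hT.2.2.1.union_support hp hu hv huv)
  exact hT' ▸ Or.inr hz

lemma IsEndBlockOn.mem_of_adj {S T : Set V} {x a b : V} (hT : IsEndBlockOn G S T x)
    (ha : a ∈ T \ {x}) (hb : b ∈ S) (hab : G.Adj a b) : b ∈ T := by
  obtain ⟨hblock, hxT, -, honly⟩ := hT
  have hbSa : b ∈ S \ {a} := ⟨hb, hab.ne'⟩
  have hSa : (G.induce (S \ {a})).Connected := by
    by_contra h
    exact ha.2 (honly a ha.1 ⟨hblock.1 ha.1, ⟨b, hbSa⟩, h⟩)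
  obtain ⟨q, hq, hqS⟩ := exists_isPath_of_reachable_induce
    (hSa.preconnected ⟨b, hbSa⟩ ⟨x, hblock.1 hxT, fun h => ha.2 (h ▸ rfl)⟩)
  have hp : (Walk.cons hab q).IsPath := hq.cons fun h => (hqS a h).2 rfl
  refine hblock.mem_of_mem_support hp ha.1 hxT ha.2 (fun z hz => ?_) (by simp)
  rcases (List.mem_cons.mp hz) with rfl | hz
  exacts [hblock.1 ha.1, (hqS z hz).1]

lemma IsEndBlockOn.nonempty_diff {S T : Set V} {x : V} (hT : IsEndBlockOn G S T x)
    (hS : (G.induce S).Preconnected) : (T \ {x}).Nonempty := by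
  obtain ⟨⟨hTS, -, -, hmax⟩, hxT, ⟨-, ⟨y, hyS, hyx⟩, -⟩, -⟩ := hT
  obtain ⟨x', hx', z, hzS, hzx, hxz⟩ :=
    exists_adj_of_preconnected_induce (D := {x}) hS (hTS hxT) rfl hyS hyx
  replace hxz : G.Adj x z := hx' ▸ hxz
  by_contra hA
  have hTx : T ⊆ {x} := Set.sdiff_eq_empty.mp (Set.not_nonempty_iff_eq_empty.mp hA)
  have hT' := hmax {x, z} (hTx.trans (by simp))
    (Set.insert_subset (hTS hxT) (by simpa using hzS)) (noCutVertexOn_pair hxz)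
  exact hzx (hTx (hT' ▸ Or.inr rfl))

lemma IsEndBlockOn.exists_interior_adj_compl {S T : Set V} {x r : V} (hT : IsEndBlockOn G S T x)
    (hS : (G.induce S).Preconnected) (hGx : (G.induce {x}ᶜ).Preconnected) (hr : r ∉ S)
    (hrx : r ≠ x) : ∃ a ∈ T \ {x}, ∃ y ∉ S, G.Adj a y :=
  exists_adj_compl_of_closed hGx (Set.sdiff_subset_sdiff_left hT.1.1) (hT.nonempty_diff hS)
    (fun _ ha _ hy hay => ⟨hT.mem_of_adj ha hy.1 hay, hy.2⟩) hr hrx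

lemma IsEndBlockOn.exists_exterior_adj_compl {S T : Set V} {x r : V} (hT : IsEndBlockOn G S T x)
    (hS : (G.induce S).Preconnected) (hGx : (G.induce {x}ᶜ).Preconnected) (hr : r ∉ S)
    (hrx : r ≠ x) : ∃ b ∈ S \ (T \ {x}), ∃ y ∉ S, G.Adj b y := by
  have hA := hT.nonempty_diff hS
  obtain ⟨⟨hTS, -, hTblock, -⟩, -, ⟨-, -, hSx⟩, -⟩ := hT
  obtain ⟨D, hDS, hD, hDA, hDcl⟩ := exists_closed_disjoint_of_not_connected_induce hSx
    (hTblock.connected_induce_diff hA) (Set.sdiff_subset_sdiff_left hTS)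
  obtain ⟨b, hb, y, hy, hby⟩ := exists_adj_compl_of_closed hGx hDS hD hDcl hr hrx
  exact ⟨b, ⟨(hDS hb).1, Set.disjoint_left.mp hDA hb⟩, y, hy, hby⟩

end Blocks

namespace ZMod

lemma forall_of_imp_add_of_isUnit {n : ℕ} [NeZero n] {k : ZMod n} (hk : IsUnit k)
    {P : ZMod n → Prop} (hstep : ∀ i, P i → P (i + k)) {i₀ : ZMod n} (h₀ : P i₀) (j : ZMod n) :
    P j := by
  have hP : ∀ m : ℕ, P (i₀ + m * k) := by
    intro m
    induction m with
    | zero => simpa using h₀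
    | succ m ih => simpa [add_mul, add_assoc] using hstep _ ih
  obtain ⟨u, rfl⟩ := hk
  simpa [mul_assoc] using hP ((j - i₀) * ↑u⁻¹).val

lemma exists_and_add_of_isUnit {n : ℕ} [NeZero n] {k : ZMod n} (hk : IsUnit k)
    {P Q : ZMod n → Prop} (hP : ∃ i, P i) (hQ : ∃ j, Q j) (hPQ : ∀ i, P i ∨ Q i) :
    ∃ i, P i ∧ Q (i + k) := by
  by_contra! h
  obtain ⟨i₀, hi₀⟩ := hP
  have hallP := forall_of_imp_add_of_isUnit hk
    (fun i hi => (hPQ (i + k)).resolve_right (h i hi)) hi₀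
  obtain ⟨j, hj⟩ := hQ
  exact h (j - k) (hallP _) (by simpa using hj)

end ZMod

theorem exists_quasi_diagonal_neighbours_general
    {V : Type*} [Fintype V] (G : SimpleGraph V) [DecidableRel G.Adj]
    (s : ℕ)
    (h2conn : KConnected G 2)
    (hdeg : ∀ v : V, 3 ≤ G.degree v)
    (vmap : ZMod (2 * s + 1) → V)
    (hind : ∀ i j : ZMod (2 * s + 1), G.Adj (vmap i) (vmap j) → j = i + 1 ∨ i = j + 1)
    (hconn : (G.induce ((Set.range vmap)ᶜ)).Connected)
    (T : Set V) (x : V) (hT : IsEndBlockOn G ((Set.range vmap)ᶜ) T x) :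
    ∃ i : ZMod (2 * s + 1),
      (∃ a ∈ T \ {x}, G.Adj (vmap i) a) ∧
      (∃ b ∈ (Set.range vmap)ᶜ \ (T \ {x}), G.Adj (vmap (i + (s : ZMod (2 * s + 1)))) b) := by
  have hGx : (G.induce {x}ᶜ).Preconnected := by
    have h := h2conn.2 {x} (by simp)
    rw [Finset.coe_singleton] at h
    exact h.preconnected
  have hv₀ : vmap 0 ∉ (Set.range vmap)ᶜ := by simp
  have hv₀x : vmap 0 ≠ x := fun h => hv₀ (h ▸ hT.1.1 hT.2.1)
  have hunit : IsUnit (s : ZMod (2 * s + 1)) := (ZMod.isUnit_iff_coprime _ _).mpr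
    ((Nat.coprime_mul_right_add_right s 1 2).mpr s.coprime_one_right)
  refine ZMod.exists_and_add_of_isUnit (Q := fun j => ∃ b ∈ (Set.range vmap)ᶜ \ (T \ {x}),
    G.Adj (vmap j) b) hunit ?_ ?_ fun i => ?_
  · obtain ⟨a, ha, y, hy, hay⟩ := hT.exists_interior_adj_compl hconn.preconnected hGx hv₀ hv₀x
    obtain ⟨i, rfl⟩ := not_not.mp hy
    exact ⟨i, a, ha, hay.symm⟩
  · obtain ⟨b, hb, y, hy, hby⟩ := hT.exists_exterior_adj_compl hconn.preconnected hGx hv₀ hv₀x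
    obtain ⟨i, rfl⟩ := not_not.mp hy
    exact ⟨i, b, hb, hby.symm⟩
  · obtain ⟨u, hu, hiu⟩ := exists_adj_notMem_range hind i (hdeg _)
    by_cases huA : u ∈ T \ {x}
    exacts [Or.inl ⟨u, huA, hiu⟩, Or.inr ⟨u, ⟨hu, huA⟩, hiu⟩]

/-- Claim 2 of the paper: if `G` is 2-connected with minimum degree at least 3,
`C = v_0 ⋯ v_{2s}` is an induced odd cycle such that `G₁ := G - V(C)` is connected but
not 2-connected, `D₁` is an end-block of `G₁` with cut-vertex `x`, `A = V(D₁) \ {x}`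
and `B = V(G₁) \ A`, then some `v_i` has a neighbour in `A` while `v_{i+s}` has a
neighbour in `B`. -/
theorem exists_quasi_diagonal_neighbours
    {V : Type*} [Fintype V] [DecidableEq V] (G : SimpleGraph V) [DecidableRel G.Adj]
    (s : ℕ) (hs : 1 ≤ s)
    (h2conn : KConnected G 2)
    (hdeg : ∀ v : V, 3 ≤ G.degree v)
    (vmap : ZMod (2 * s + 1) → V) (hinj : Function.Injective vmap)
    (hadj : ∀ i : ZMod (2 * s + 1), G.Adj (vmap i) (vmap (i + 1)))
    (hind : ∀ i j : ZMod (2 * s + 1), G.Adj (vmap i) (vmap j) → j = i + 1 ∨ i = j + 1)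
    (hconn : (G.induce ((Set.range vmap)ᶜ)).Connected)
    (hnot2conn : ¬ TwoConnectedOn G ((Set.range vmap)ᶜ))
    (T : Set V) (x : V) (hT : IsEndBlockOn G ((Set.range vmap)ᶜ) T x) :
    ∃ i : ZMod (2 * s + 1),
      (∃ a ∈ T \ {x}, G.Adj (vmap i) a) ∧
      (∃ b ∈ (Set.range vmap)ᶜ \ (T \ {x}), G.Adj (vmap (i + (s : ZMod (2 * s + 1)))) b) :=
  exists_quasi_diagonal_neighbours_general G s h2conn hdeg vmap hind hconn T x hT
end

section
/- Let G be a finite simple 2-connected non-bipartite graph, let x and y be distinct vertices such that G − {x, y} is disconnected, let C be a connected component of G − {x, y}, let G_1 be the subgraph of G induced on V(C) ∪ {x, y}, and let G_2 be the subgraph of G induced on V(G) \ V(C). If both G_1 and G_2 are bipartite, then either every path from x to y in G_1 has even length and every path from x to y in G_2 has odd length, or every path from x to y in G_1 has odd length and every path from x to y in G_2 has even length. -/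
/-- A graph is non-bipartite iff it contains a cycle of odd length. -/
def NonBipartite {V : Type*} (G : SimpleGraph V) : Prop :=
  ∃ (v : V) (c : G.Walk v v), c.IsCycle ∧ Odd c.length

/-- The subgraph of `G` induced on `S` is bipartite: `S` can be partitioned into two
parts so that every edge inside `S` joins the two parts. -/
def BipartiteOn {V : Type*} (G : SimpleGraph V) (S : Set V) : Prop :=
  ∃ A : Set V, ∀ u ∈ S, ∀ w ∈ S, G.Adj u w → (u ∈ A ↔ w ∉ A)

/-- `T` is (the vertex set of) a connected component of the subgraph of `G` induced on
the ambient set `amb`. -/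
def IsComponentOn {V : Type*} (G : SimpleGraph V) (amb T : Set V) : Prop :=
  T.Nonempty ∧ T ⊆ amb ∧ (G.induce T).Connected ∧
    ∀ u ∈ T, ∀ w ∈ amb, G.Adj u w → w ∈ T

/-!
Fix proper 2-colourings `A₁` of `G₁` and `A₂` of `G₂`. Inside a properly 2-coloured piece, an
`x`–`y` walk is even exactly when `x` and `y` get the same colour. If `x` and `y` were
same-coloured in both pieces or differently coloured in both, then after possibly swapping the
colours of `A₂` the two colourings would agree on the separator `{x, y}`. Since every edge
leaving `T` ends in `{x, y}`, they would then glue to a proper 2-colouring of all of `G`,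
which the odd cycle forbids.
-/

def IsTwoColoringOn {V : Type*} (G : SimpleGraph V) (S A : Set V) : Prop :=
  ∀ u ∈ S, ∀ w ∈ S, G.Adj u w → (u ∈ A ↔ w ∉ A)

namespace IsTwoColoringOn

variable {V : Type*} {G : SimpleGraph V} {S A : Set V}

theorem compl (h : IsTwoColoringOn G S A) : IsTwoColoringOn G S Aᶜ := fun u hu w hw huw => by
  have := h u hu w hw huw
  simp only [Set.mem_compl_iff]
  tauto

theorem even_length_iff (h : IsTwoColoringOn G S A) {x y : V} (p : G.Walk x y)
    (hp : ∀ u ∈ p.support, u ∈ S) : Even p.length ↔ (x ∈ A ↔ y ∈ A) := by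
  induction p with
  | nil => simp
  | @cons u v w huv q ih =>
    have hq : ∀ z ∈ q.support, z ∈ S := fun z hz => hp z (List.mem_cons_of_mem u hz)
    have hcolor := h u (hp u List.mem_cons_self) v (hq v q.start_mem_support) huv
    simp only [SimpleGraph.Walk.length_cons, Nat.even_add_one, ih hq]
    tauto

theorem ite {T B A₁ A₂ : Set V} (hN : ∀ u ∈ T, ∀ w ∉ T, G.Adj u w → w ∈ B)
    (h₁ : IsTwoColoringOn G (T ∪ B) A₁) (h₂ : IsTwoColoringOn G Tᶜ A₂)
    (hB : ∀ b ∈ B, b ∈ A₁ ↔ b ∈ A₂) : IsTwoColoringOn G Set.univ (T.ite A₁ A₂) := by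
  have mem_in : ∀ v ∈ T, v ∈ T.ite A₁ A₂ ↔ v ∈ A₁ := fun v hv => by simp [Set.ite, hv]
  have mem_out : ∀ v ∉ T, v ∈ T.ite A₁ A₂ ↔ v ∈ A₂ := fun v hv => by simp [Set.ite, hv]
  intro u _ w _ huw
  by_cases hu : u ∈ T <;> by_cases hw : w ∈ T
  · rw [mem_in u hu, mem_in w hw]
    exact h₁ u (.inl hu) w (.inl hw) huw
  · rw [mem_in u hu, mem_out w hw, ← hB w (hN u hu w hw huw)]
    exact h₁ u (.inl hu) w (.inr (hN u hu w hw huw)) huw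
  · rw [mem_out u hu, mem_in w hw, ← hB u (hN w hw u hu huw.symm)]
    exact h₁ u (.inr (hN w hw u hu huw.symm)) w (.inl hw) huw
  · rw [mem_out u hu, mem_out w hw]
    exact h₂ u hu w hw huw

end IsTwoColoringOn

theorem NonBipartite.not_isTwoColoringOn_univ {V : Type*} {G : SimpleGraph V}
    (hG : NonBipartite G) (A : Set V) : ¬ IsTwoColoringOn G Set.univ A := fun hA => by
  obtain ⟨v, c, -, hodd⟩ := hG
  exact Nat.not_even_iff_odd.2 hodd ((hA.even_length_iff c fun u _ => Set.mem_univ u).2 Iff.rfl)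

theorem NonBipartite.sameColor_iff_not_sameColor {V : Type*} {G : SimpleGraph V}
    (hG : NonBipartite G) {x y : V} {T A₁ A₂ : Set V}
    (hN : ∀ u ∈ T, ∀ w ∉ T, G.Adj u w → w ∈ ({x, y} : Set V))
    (h₁ : IsTwoColoringOn G (T ∪ {x, y}) A₁) (h₂ : IsTwoColoringOn G Tᶜ A₂) :
    (x ∈ A₂ ↔ y ∈ A₂) ↔ ¬ (x ∈ A₁ ↔ y ∈ A₁) := by
  have glue : ∀ A, IsTwoColoringOn G Tᶜ A → (x ∈ A₁ ↔ x ∈ A) → (y ∈ A₁ ↔ y ∈ A) → False :=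
    fun A hA hx hy => hG.not_isTwoColoringOn_univ _ <|
      IsTwoColoringOn.ite hN h₁ hA (by rintro b (rfl | rfl) <;> assumption)
  by_cases hx : x ∈ A₁ ↔ x ∈ A₂
  · have := glue A₂ h₂ hx
    tauto
  · have := glue A₂ᶜ h₂.compl
    simp only [Set.mem_compl_iff] at this
    tauto

theorem bipartite_pieces_path_parity_general
    {V : Type*} (G : SimpleGraph V)
    (x y : V)
    (hnb : NonBipartite G)
    (T : Set V) (hT : IsComponentOn G (({x, y} : Set V)ᶜ) T)
    (hG1 : BipartiteOn G (T ∪ {x, y}))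
    (hG2 : BipartiteOn G (Tᶜ)) :
    ((∀ P : G.Walk x y, P.IsPath → (∀ u ∈ P.support, u ∈ T ∪ {x, y}) → Even P.length) ∧
      (∀ P : G.Walk x y, P.IsPath → (∀ u ∈ P.support, u ∈ Tᶜ) → Odd P.length)) ∨
    ((∀ P : G.Walk x y, P.IsPath → (∀ u ∈ P.support, u ∈ T ∪ {x, y}) → Odd P.length) ∧
      (∀ P : G.Walk x y, P.IsPath → (∀ u ∈ P.support, u ∈ Tᶜ) → Even P.length)) := by
  obtain ⟨A₁, h₁ : IsTwoColoringOn G (T ∪ {x, y}) A₁⟩ := hG1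
  obtain ⟨A₂, h₂ : IsTwoColoringOn G Tᶜ A₂⟩ := hG2
  have hN : ∀ u ∈ T, ∀ w ∉ T, G.Adj u w → w ∈ ({x, y} : Set V) := fun u hu w hw huw =>
    not_not.1 fun hxy => hw (hT.2.2.2 u hu w hxy huw)
  have hsep := hnb.sameColor_iff_not_sameColor hN h₁ h₂
  by_cases hsame : x ∈ A₁ ↔ y ∈ A₁
  · refine .inl ⟨fun P _ hP => (h₁.even_length_iff P hP).2 hsame, fun P _ hP => ?_⟩
    rw [← Nat.not_even_iff_odd, h₂.even_length_iff P hP, hsep]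
    exact not_not.2 hsame
  · refine .inr ⟨fun P _ hP => ?_, fun P _ hP => (h₂.even_length_iff P hP).2 (hsep.2 hsame)⟩
    rw [← Nat.not_even_iff_odd, h₁.even_length_iff P hP]
    exact hsame

/-- If `G` is 2-connected and non-bipartite, `G - {x, y}` is disconnected with component
`C` (with vertex set `T`), and both `G₁ := G[T ∪ {x, y}]` and `G₂ := G[V ∖ T]` are
bipartite, then either all `x`–`y` paths in `G₁` are even and all `x`–`y` paths in `G₂`
are odd, or vice versa. -/
theorem bipartite_pieces_path_parity
    {V : Type*} [Fintype V] [DecidableEq V] (G : SimpleGraph V)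
    (x y : V) (hxy : x ≠ y)
    (h2conn : KConnected G 2) (hnb : NonBipartite G)
    (hdisc : ¬ (G.induce (({x, y} : Set V)ᶜ)).Connected)
    (T : Set V) (hT : IsComponentOn G (({x, y} : Set V)ᶜ) T)
    (hG1 : BipartiteOn G (T ∪ {x, y}))
    (hG2 : BipartiteOn G (Tᶜ)) :
    ((∀ P : G.Walk x y, P.IsPath → (∀ u ∈ P.support, u ∈ T ∪ {x, y}) → Even P.length) ∧
      (∀ P : G.Walk x y, P.IsPath → (∀ u ∈ P.support, u ∈ Tᶜ) → Odd P.length)) ∨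
    ((∀ P : G.Walk x y, P.IsPath → (∀ u ∈ P.support, u ∈ T ∪ {x, y}) → Odd P.length) ∧
      (∀ P : G.Walk x y, P.IsPath → (∀ u ∈ P.support, u ∈ Tᶜ) → Even P.length)) :=
  bipartite_pieces_path_parity_general G x y hnb T hT hG1 hG2
end
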